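/- Let R be an F_p-algebra with flat Frobenius φ, and let M be an R-module with an R-linear map f : M → φ*M. Define the unitalization M^unit as the colimit of M → φ*M → φ²*M → ⋯ (maps given by f, φ*f, φ²*f, …). Then M^unit carries a natural unit R[F]-module structure: the canonical map φ*(M^unit) → M^unit is an isomorphism. -/

import Mathlib

/-!
The Frobenius operator on the colimit `C` is induced by the maps `j n`, which commute with the
transition maps. By the universal property of `j n`, the linearization `φ*N n → N (n + 1)` is an
isomorphism, and these isomorphisms form a map from the tower `φ*N 0 → φ*N 1 → ⋯` to the shifted
tower `N 1 → N 2 → ⋯`. The linearization `φ*C → C` is the induced map on colimits: it is surjective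
because every element of `φ*C` comes from some `φ*N n`, and injective because an element of
`N (n + 1)` vanishing in `C` already vanishes at a finite stage, where the levelwise isomorphism
can be inverted.
-/

open scoped TensorProduct

/-- A copy of `R` viewed as an `R`-algebra via the Frobenius `φ : R → R`, so that
`Rphi p R ⊗[R] M` is the Frobenius base change `φ*M`. -/
def Rphi (_p : ℕ) (R : Type u) : Type u := R

instance Rphi.instCommRing (p : ℕ) (R : Type u) [CommRing R] : CommRing (Rphi p R) :=
  ‹CommRing R›

noncomputable instance Rphi.instAlgebra (p : ℕ) (R : Type u) [CommRing R] [Fact p.Prime]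
    [CharP R p] : Algebra R (Rphi p R) :=
  RingHom.toAlgebra (S := Rphi p R) (frobenius R p)

/-- A unit `R[F]`-module structure: the linearization `φ*M → M`, `a ⊗ m ↦ a • F m`, is an
isomorphism. -/
def UnitFModule (p : ℕ) (R : Type u) (M : Type v) [Fact p.Prime] [CommRing R] [CharP R p]
    [AddCommGroup M] [Module R M] (F : M → M) : Prop :=
  ∃ Fs : (Rphi p R) ⊗[R] M →+ M,
    (∀ (a : R) (m : M), Fs ((show Rphi p R from a) ⊗ₜ[R] m) = a • F m) ∧
    Function.Bijective Fs

/-- Composite transition maps of a tower `N 0 → N 1 → ⋯`. -/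
def tIter {R : Type u} [CommRing R] (N : ℕ → Type v) [∀ n, AddCommGroup (N n)]
    [∀ n, Module R (N n)] (t : ∀ n, N n →ₗ[R] N (n + 1)) (n : ℕ) :
    (k : ℕ) → N n → N (n + k)
  | 0 => fun x => x
  | k + 1 => fun x => t (n + k) (tIter N t n k x)

noncomputable section Frobenius

variable {p : ℕ} [Fact p.Prime] {R : Type u} [CommRing R] [CharP R p]

def Rphi.toR (a : Rphi p R) : R := a

variable {X X' Y Y' : Type*} [AddCommGroup X] [Module R X] [AddCommGroup X'] [Module R X']
  [AddCommGroup Y] [Module R Y] [AddCommGroup Y'] [Module R Y']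

def frobLinearization (f : X →ₛₗ[frobenius R p] Y) : Rphi p R ⊗[R] X →+ Y :=
  TensorProduct.liftAddHom
    (AddMonoidHom.mk' (fun a => AddMonoidHom.mk' (fun x => a.toR • f x) fun x y => by
        rw [map_add, smul_add])
      fun a b => AddMonoidHom.ext fun x => add_smul a.toR b.toR (f x))
    fun r a x => by
      show (r • a).toR • f x = a.toR • f (r • x)
      rw [map_smulₛₗ, smul_smul, frobenius_def, mul_comm]
      rfl

theorem frobLinearization_tmul (f : X →ₛₗ[frobenius R p] Y) (a : Rphi p R) (x : X) :
    frobLinearization f (a ⊗ₜ[R] x) = a.toR • f x :=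
  rfl

theorem frobLinearization_smul (f : X →ₛₗ[frobenius R p] Y) (b : Rphi p R)
    (z : Rphi p R ⊗[R] X) : frobLinearization f (b • z) = b.toR • frobLinearization f z := by
  induction z using TensorProduct.induction_on with
  | zero => rw [smul_zero, map_zero, smul_zero]
  | tmul a x => exact mul_smul b.toR a.toR (f x)
  | add z w hz hw => rw [smul_add, map_add, map_add, hz, hw, smul_add]

theorem frobLinearization_lTensor (u : X →ₗ[R] X') (v : Y →ₗ[R] Y') (f : X →ₛₗ[frobenius R p] Y)
    (f' : X' →ₛₗ[frobenius R p] Y') (h : ∀ x, v (f x) = f' (u x)) (w : Rphi p R ⊗[R] X) :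
    v (frobLinearization f w) = frobLinearization f' (u.lTensor (Rphi p R) w) := by
  induction w using TensorProduct.induction_on with
  | zero => simp only [map_zero]
  | tmul a x =>
    rw [LinearMap.lTensor_tmul, frobLinearization_tmul, frobLinearization_tmul, map_smul, h]
  | add w w' hw hw' => rw [map_add, map_add, hw, hw', map_add, map_add]

variable (p R) in
/-- `φ*X` as an `R`-module through its left factor; on `Rphi p R ⊗[R] X` itself `r` acts as
`r ^ p`. -/
def FrobeniusPullback (X : Type v) [AddCommGroup X] [Module R X] : Type (max u v) :=
  Rphi p R ⊗[R] X

instance : AddCommGroup (FrobeniusPullback p R X) :=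
  inferInstanceAs (AddCommGroup (Rphi p R ⊗[R] X))

instance : Module R (FrobeniusPullback p R X) :=
  inferInstanceAs (Module (Rphi p R) (Rphi p R ⊗[R] X))

variable (p) in
def IsFrobeniusBaseChange {X X' : Type u} [AddCommGroup X] [Module R X] [AddCommGroup X']
    [Module R X'] (j : X →ₛₗ[frobenius R p] X') : Prop :=
  ∀ (Y : Type u) [AddCommGroup Y] [Module R Y] (f : X →ₛₗ[frobenius R p] Y),
    ∃! h : X' →ₗ[R] Y, ∀ x, h (j x) = f x

theorem IsFrobeniusBaseChange.bijective_frobLinearization {X X' : Type u} [AddCommGroup X]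
    [Module R X] [AddCommGroup X'] [Module R X'] {j : X →ₛₗ[frobenius R p] X'}
    (hj : IsFrobeniusBaseChange p j) : Function.Bijective (frobLinearization j) := by
  -- `x ↦ 1 ⊗ x` is semilinear for the left `R`-action; its linear extension inverts
  -- `frobLinearization j`.
  let one : X →ₛₗ[frobenius R p] FrobeniusPullback p R X :=
    { toFun := fun x => (1 : Rphi p R) ⊗ₜ[R] x
      map_add' := TensorProduct.tmul_add 1
      map_smul' := fun r x => by
        rw [← TensorProduct.smul_tmul]
        rfl }
  obtain ⟨s, hs, -⟩ := hj _ one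
  let lin_s : X' →ₗ[R] X' :=
    { toFun := fun y => frobLinearization j (s y)
      map_add' := fun y y' => by rw [map_add s]; exact map_add _ _ _
      map_smul' := fun r y => by rw [map_smul s]; exact frobLinearization_smul j r (s y) }
  have hlin_s : lin_s = LinearMap.id := by
    refine (hj X' j).unique (fun x => ?_) fun x => rfl
    show frobLinearization j (s (j x)) = j x
    rw [hs]
    exact one_smul R (j x)
  have hs_lin : ∀ z, s (frobLinearization j z) = z := by
    intro z
    induction z using TensorProduct.induction_on with
    | zero => rw [map_zero, map_zero]; rfl
    | tmul a x =>
      rw [frobLinearization_tmul, map_smul, hs]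
      exact congrArg (· ⊗ₜ[R] x) (mul_one a)
    | add z w hz hw => rw [map_add, map_add, hz, hw]; rfl
  exact Function.bijective_iff_has_inverse.2 ⟨s, hs_lin, LinearMap.congr_fun hlin_s⟩

end Frobenius

section Tower

variable {R : Type u} [CommRing R] {N : ℕ → Type v} [∀ n, AddCommGroup (N n)]
  [∀ n, Module R (N n)] {t : ∀ n, N n →ₗ[R] N (n + 1)}

theorem apply_tIter {Y : Type*} (f : ∀ n, N n → Y) (hf : ∀ n x, f (n + 1) (t n x) = f n x)
    (n k : ℕ) (x : N n) : f (n + k) (tIter N t n k x) = f n x := by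
  induction k with
  | zero => rfl
  | succ k ih => exact (hf (n + k) _).trans ih

theorem exists_common_stage {Y : Type*} (f : ∀ n, N n → Y)
    (hf : ∀ n x, f (n + 1) (t n x) = f n x) {n m : ℕ} (x : N n) (y : N m) :
    ∃ l, ∃ x' y' : N l, f l x' = f n x ∧ f l y' = f m y := by
  rcases le_total n m with h | h
  · obtain ⟨d, rfl⟩ := Nat.exists_eq_add_of_le h
    exact ⟨n + d, tIter N t n d x, y, apply_tIter f hf n d x, rfl⟩
  · obtain ⟨d, rfl⟩ := Nat.exists_eq_add_of_le h
    exact ⟨m + d, x, tIter N t m d y, rfl, apply_tIter f hf m d y⟩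

theorem tIter_map {M : ℕ → Type*} [∀ n, AddCommGroup (M n)] [∀ n, Module R (M n)]
    {s : ∀ n, M n →ₗ[R] M (n + 1)} (φ : ∀ n, M n → N n)
    (hφ : ∀ n w, t n (φ n w) = φ (n + 1) (s n w)) (n k : ℕ) (w : M n) :
    tIter N t n k (φ n w) = φ (n + k) (tIter M s n k w) := by
  induction k with
  | zero => rfl
  | succ k ih => exact (congrArg (t (n + k)) ih).trans (hφ (n + k) _)

theorem tIter_succ_eq_zero_iff (n k : ℕ) (x : N (n + 1)) :
    tIter N t (n + 1) k x = 0 ↔ tIter (fun i => N (i + 1)) (fun i => t (i + 1)) n k x = 0 := by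
  -- `n + 1 + k` and `n + k + 1` are not definitionally equal, so compare the iterates up to `HEq`.
  have heq_t : ∀ {i i'} (h : i = i') {y : N i} {y' : N i'}, HEq y y' → HEq (t i y) (t i' y') := by
    rintro i _ rfl y y' hy
    rw [eq_of_heq hy]
  have heq_zero : ∀ {i i'} (h : i = i') {y : N i} {y' : N i'}, HEq y y' → (y = 0 ↔ y' = 0) := by
    rintro i _ rfl y y' hy
    rw [eq_of_heq hy]
  refine heq_zero (Nat.succ_add n k) ?_
  induction k with
  | zero => rfl
  | succ k ih => exact heq_t (Nat.succ_add n k) ih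

variable (t) in
structure IsTowerColimit {C : Type*} [AddCommGroup C] [Module R C] (g : ∀ n, N n →ₗ[R] C) :
    Prop where
  map_succ : ∀ n x, g (n + 1) (t n x) = g n x
  exists_eq : ∀ c, ∃ n x, g n x = c
  eventually_zero : ∀ n x, g n x = 0 → ∃ k, tIter N t n k x = 0

namespace IsTowerColimit

variable {C : Type*} [AddCommGroup C] [Module R C] {g : ∀ n, N n →ₗ[R] C}
  (hC : IsTowerColimit t g)
include hC

theorem apply_eq_of_eq {Y : Type*} [AddCommGroup Y] (h : ∀ n, N n →+ Y)
    (hh : ∀ n x, h (n + 1) (t n x) = h n x) {n m : ℕ} {x : N n} {y : N m}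
    (hxy : g n x = g m y) : h n x = h m y := by
  obtain ⟨l, x', y', hx, hy⟩ := exists_common_stage (fun n x => (g n x, h n x))
    (fun n x => Prod.ext (hC.map_succ n x) (hh n x)) x y
  obtain ⟨hgx, hhx⟩ := Prod.mk.inj hx
  obtain ⟨hgy, hhy⟩ := Prod.mk.inj hy
  obtain ⟨k, hk⟩ := hC.eventually_zero l (x' - y') (by rw [map_sub, hgx, hgy, hxy, sub_self])
  have hxy' : h l (x' - y') = 0 := by
    rw [← apply_tIter (fun n => h n) hh l k, hk, map_zero]
  rw [← hhx, ← hhy, ← sub_eq_zero, ← map_sub, hxy']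

theorem exists_addMonoidHom {Y : Type*} [AddCommGroup Y] (h : ∀ n, N n →+ Y)
    (hh : ∀ n x, h (n + 1) (t n x) = h n x) : ∃ F : C →+ Y, ∀ n x, F (g n x) = h n x := by
  choose n x hx using hC.exists_eq
  have hF : ∀ m y, h (n (g m y)) (x (g m y)) = h m y := fun m y =>
    hC.apply_eq_of_eq h hh (hx _)
  refine ⟨AddMonoidHom.mk' (fun c => h (n c) (x c)) fun c d => ?_, hF⟩
  obtain ⟨mc, yc, rfl⟩ := hC.exists_eq c
  obtain ⟨md, yd, rfl⟩ := hC.exists_eq d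
  obtain ⟨l, yc', yd', hc, hd⟩ := exists_common_stage (fun n => g n) hC.map_succ yc yd
  rw [hF mc yc, hF md yd, ← hc, ← hd, ← map_add, hF, map_add, hC.apply_eq_of_eq h hh hc,
    hC.apply_eq_of_eq h hh hd]

theorem shift : IsTowerColimit (fun n => t (n + 1)) fun n => g (n + 1) where
  map_succ n := hC.map_succ (n + 1)
  exists_eq c :=
    let ⟨n, x, hx⟩ := hC.exists_eq c
    ⟨n, t n x, (hC.map_succ n x).trans hx⟩
  eventually_zero n x hx :=
    let ⟨k, hk⟩ := hC.eventually_zero (n + 1) x hx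
    ⟨k, (tIter_succ_eq_zero_iff n k x).1 hk⟩

theorem lTensor_map_succ (A : Type*) [AddCommGroup A] [Module R A] (n : ℕ) (w : A ⊗[R] N n) :
    (g (n + 1)).lTensor A ((t n).lTensor A w) = (g n).lTensor A w := by
  rw [← LinearMap.lTensor_comp_apply]
  exact congrArg (fun u : N n →ₗ[R] C => u.lTensor A w) (LinearMap.ext (hC.map_succ n))

theorem exists_lTensor_eq (A : Type*) [AddCommGroup A] [Module R A] (z : A ⊗[R] C) :
    ∃ n w, (g n).lTensor A w = z := by
  induction z using TensorProduct.induction_on with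
  | zero => exact ⟨0, 0, map_zero _⟩
  | tmul a c =>
    obtain ⟨n, x, rfl⟩ := hC.exists_eq c
    exact ⟨n, a ⊗ₜ x, rfl⟩
  | add z z' hz hz' =>
    obtain ⟨n, w, rfl⟩ := hz
    obtain ⟨n', w', rfl⟩ := hz'
    obtain ⟨l, v, v', hv, hv'⟩ :=
      exists_common_stage (fun n => (g n).lTensor A) (hC.lTensor_map_succ A) w w'
    exact ⟨l, v + v', by rw [map_add, hv, hv']⟩

theorem bijective_of_forall_bijective {M : ℕ → Type*} [∀ n, AddCommGroup (M n)]
    [∀ n, Module R (M n)] {s : ∀ n, M n →ₗ[R] M (n + 1)} {D : Type*} [AddCommGroup D]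
    [Module R D] {ψ : ∀ n, M n →ₗ[R] D} (hψ : ∀ n w, ψ (n + 1) (s n w) = ψ n w)
    (hψ_surj : ∀ d, ∃ n w, ψ n w = d) (φ : ∀ n, M n →+ N n)
    (hφ : ∀ n w, t n (φ n w) = φ (n + 1) (s n w)) (hφ_bij : ∀ n, Function.Bijective (φ n))
    (F : D →+ C) (hF : ∀ n w, F (ψ n w) = g n (φ n w)) : Function.Bijective F := by
  constructor
  · refine (injective_iff_map_eq_zero F).2 fun d hd => ?_
    obtain ⟨n, w, rfl⟩ := hψ_surj d
    obtain ⟨k, hk⟩ := hC.eventually_zero n (φ n w) (by rw [← hF, hd])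
    rw [tIter_map (fun n => φ n) hφ, ← map_zero (φ (n + k))] at hk
    rw [← apply_tIter (fun n => ψ n) hψ n k, (hφ_bij (n + k)).1 hk, map_zero]
  · intro c
    obtain ⟨n, x, rfl⟩ := hC.exists_eq c
    obtain ⟨w, rfl⟩ := (hφ_bij n).2 x
    exact ⟨ψ n w, hF n w⟩

end IsTowerColimit

end Tower

namespace IsTowerColimit

variable {p : ℕ} [Fact p.Prime] {R : Type u} [CommRing R] [CharP R p] {N : ℕ → Type u}
  [∀ n, AddCommGroup (N n)] [∀ n, Module R (N n)] {t : ∀ n, N n →ₗ[R] N (n + 1)}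
  {C : Type*} [AddCommGroup C] [Module R C] {g : ∀ n, N n →ₗ[R] C}

theorem exists_frobenius (hC : IsTowerColimit t g) (j : ∀ n, N n →ₛₗ[frobenius R p] N (n + 1))
    (hj : ∀ n x, t (n + 1) (j n x) = j (n + 1) (t n x)) :
    ∃ F : C →ₛₗ[frobenius R p] C, ∀ n x, F (g n x) = g (n + 1) (j n x) := by
  obtain ⟨F, hF⟩ := hC.exists_addMonoidHom (fun n => (g (n + 1)).toAddMonoidHom.comp (j n))
    fun n x => by
      show g (n + 2) (j (n + 1) (t n x)) = g (n + 1) (j n x)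
      rw [← hj, hC.map_succ]
  refine ⟨{ F with map_smul' := fun r c => ?_ }, hF⟩
  obtain ⟨n, x, rfl⟩ := hC.exists_eq c
  show F (r • g n x) = frobenius R p r • F (g n x)
  rw [← map_smul, hF, hF]
  show g (n + 1) (j n (r • x)) = _
  rw [map_smulₛₗ, map_smul]
  rfl

theorem exists_unit_frobenius (hC : IsTowerColimit t g)
    (j : ∀ n, N n →ₛₗ[frobenius R p] N (n + 1)) (hj_univ : ∀ n, IsFrobeniusBaseChange p (j n))
    (hj : ∀ n x, t (n + 1) (j n x) = j (n + 1) (t n x)) :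
    ∃ F : C →ₛₗ[frobenius R p] C,
      (∀ n x, F (g n x) = g (n + 1) (j n x)) ∧ Function.Bijective (frobLinearization F) := by
  obtain ⟨F, hF⟩ := hC.exists_frobenius j hj
  refine ⟨F, hF, hC.shift.bijective_of_forall_bijective (hC.lTensor_map_succ (Rphi p R))
    (hC.exists_lTensor_eq (Rphi p R)) (fun n => frobLinearization (j n))
    (fun n => frobLinearization_lTensor _ _ _ _ (hj n))
    (fun n => (hj_univ n).bijective_frobLinearization) (frobLinearization F)
    fun n w => (frobLinearization_lTensor _ _ _ _ (fun x => (hF n x).symm) w).symm⟩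

end IsTowerColimit

/-- `N 0` plays the role of `M`; each `j n : N n → N (n+1)` is the canonical (additive,
Frobenius-semilinear) map `X → φ*X`, characterized by its universal property among semilinear
maps out of `N n`; `t 0 = f` and `t (n+1) = φ*(t n)` is expressed by the compatibility
`t (n+1) ∘ j n = j (n+1) ∘ t n`; and `C` together with the maps `g n` is the colimit of the tower
`(N, t)`. -/
theorem stmt13_general (p : ℕ) [Fact p.Prime] (R : Type u) [CommRing R] [CharP R p]
    (N : ℕ → Type u) [∀ n, AddCommGroup (N n)] [∀ n, Module R (N n)]
    (j : ∀ n, N n → N (n + 1))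
    (hjadd : ∀ n x y, j n (x + y) = j n x + j n y)
    (hjsemi : ∀ n (r : R) (x : N n), j n (r • x) = r ^ p • j n x)
    (hjuniv : ∀ (n : ℕ) (Y : Type u) [AddCommGroup Y] [Module R Y] (gq : N n → Y),
      (∀ x y, gq (x + y) = gq x + gq y) → (∀ (r : R) (x : N n), gq (r • x) = r ^ p • gq x) →
      ∃! h : N (n + 1) →ₗ[R] Y, ∀ x, h (j n x) = gq x)
    (t : ∀ n, N n →ₗ[R] N (n + 1))
    (hcompat : ∀ n (x : N n), t (n + 1) (j n x) = j (n + 1) (t n x))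
    (C : Type u) [AddCommGroup C] [Module R C] (g : ∀ n, N n →ₗ[R] C)
    (hg : ∀ n (x : N n), g (n + 1) (t n x) = g n x)
    (hsurj : ∀ c : C, ∃ n, ∃ x : N n, g n x = c)
    (hker : ∀ n (x : N n), g n x = 0 → ∃ k, tIter N t n k x = 0) :
    ∃ FC : C → C,
      (∀ x y, FC (x + y) = FC x + FC y) ∧
      (∀ (r : R) (c : C), FC (r • c) = r ^ p • FC c) ∧
      (∀ n (x : N n), FC (g n x) = g (n + 1) (j n x)) ∧
      UnitFModule p R C FC := by
  let jₛ : ∀ n, N n →ₛₗ[frobenius R p] N (n + 1) := fun n =>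
    { toFun := j n
      map_add' := hjadd n
      map_smul' := fun r x => by rw [hjsemi, frobenius_def] }
  have hj_univ : ∀ n, IsFrobeniusBaseChange p (jₛ n) := fun n Y _ _ f =>
    hjuniv n Y f (map_add f) fun r x => by rw [map_smulₛₗ, frobenius_def]
  obtain ⟨F, hF, hbij⟩ :=
    IsTowerColimit.exists_unit_frobenius ⟨hg, hsurj, hker⟩ jₛ hj_univ hcompat
  exact ⟨F, map_add F, fun r c => by rw [map_smulₛₗ, frobenius_def], hF,
    frobLinearization F, fun _ _ => rfl, hbij⟩

/-- Let `R` be an `F_p`-algebra with flat Frobenius `φ`, and let `M` be an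
`R`-module with an `R`-linear map `f : M → φ*M`.  The unitalization `M^unit` is the colimit
of `M → φ*M → φ²*M → ⋯`.  Then `M^unit` carries a natural unit `R[F]`-module structure: the
canonical semilinear operator (shifting the tower) has bijective linearization
`φ*(M^unit) → M^unit`.

Encoding: `N 0` plays the role of `M`; each `j n : N n → N (n+1)` is the canonical
(additive, Frobenius-semilinear) map `X → φ*X`, characterized by its universal property
among semilinear maps out of `N n`; `t 0 = f` and `t (n+1) = φ*(t n)` is expressed by the
compatibility `t (n+1) ∘ j n = j (n+1) ∘ t n`; and `C` together with the maps `g n` is the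
colimit of the tower `(N, t)`. -/
theorem stmt13 (p : ℕ) [Fact p.Prime] (R : Type u) [CommRing R] [CharP R p]
    [Module.Flat R (Rphi p R)]
    (N : ℕ → Type u) [∀ n, AddCommGroup (N n)] [∀ n, Module R (N n)]
    (j : ∀ n, N n → N (n + 1))
    (hjadd : ∀ n x y, j n (x + y) = j n x + j n y)
    (hjsemi : ∀ n (r : R) (x : N n), j n (r • x) = r ^ p • j n x)
    (hjuniv : ∀ (n : ℕ) (Y : Type u) [AddCommGroup Y] [Module R Y] (gq : N n → Y),
      (∀ x y, gq (x + y) = gq x + gq y) → (∀ (r : R) (x : N n), gq (r • x) = r ^ p • gq x) →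
      ∃! h : N (n + 1) →ₗ[R] Y, ∀ x, h (j n x) = gq x)
    (t : ∀ n, N n →ₗ[R] N (n + 1))
    (hcompat : ∀ n (x : N n), t (n + 1) (j n x) = j (n + 1) (t n x))
    (C : Type u) [AddCommGroup C] [Module R C] (g : ∀ n, N n →ₗ[R] C)
    (hg : ∀ n (x : N n), g (n + 1) (t n x) = g n x)
    (hsurj : ∀ c : C, ∃ n, ∃ x : N n, g n x = c)
    (hker : ∀ n (x : N n), g n x = 0 → ∃ k, tIter N t n k x = 0) :
    ∃ FC : C → C,
      (∀ x y, FC (x + y) = FC x + FC y) ∧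
      (∀ (r : R) (c : C), FC (r • c) = r ^ p • FC c) ∧
      (∀ n (x : N n), FC (g n x) = g (n + 1) (j n x)) ∧
      UnitFModule p R C FC :=
  stmt13_general p R N j hjadd hjsemi hjuniv t hcompat C g hg hsurj hker
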